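/- arXiv:2601.15409 — 10 statements merged into one kernel-verified Lean document; each statement's English description precedes it below -/
import Mathlib

section
/- Let k be an algebraically closed field of characteristic different from 2 and let K be the field of rational functions k(u,v) in two variables over k (the fraction field of the polynomial ring k[u,v]). Set f := u² + v² + 1 − 2(uv + u + v) ∈ K. Then each of the ternary diagonal quadratic forms ⟨u, v, f⟩, ⟨v, uv, f⟩, ⟨u, uv, f⟩ and ⟨u, v, uv⟩ over K is a subform of the 2-fold Pfister form ⟨1, u, v, uv⟩; that is, for each of these ternary diagonal forms q there exists an element w ∈ K such that the quaternary diagonal form obtained from q by appending the entry w is equivalent (isometric) over K to the diagonal form ⟨1, u, v, uv⟩. -/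
/-!
Over a field containing `√-1`, writing `-4 = (2i)²`,
`f = (u + v - 1)² - 4uv = (u - v + 1)² - 4u = (u - v - 1)² - 4v`,
so `f` is a value of each binary form `⟨1, c⟩` with `c ∈ {uv, u, v}`. A nonzero value `d`
of `⟨1, c⟩` gives `⟨1, c⟩ ≃ ⟨d, dc⟩`, hence `⟨p, q, f, fc⟩ ≃ ⟨1, p, q, c⟩`, and a
permutation of the entries brings `⟨1, p, q, c⟩` to `⟨1, u, v, uv⟩`. The form `⟨u, v, uv⟩`
needs only the permutation, with `w = 1`.
-/

open MvPolynomial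

namespace QuadraticMap

theorem equivalent_weightedSumSquares_of_perm {R ι κ : Type*} [CommSemiring R] [Fintype ι]
    [Fintype κ] {w : κ → R} {w' : ι → R} (e : ι ≃ κ) (h : ∀ i, w' i = w (e i)) :
    Equivalent (weightedSumSquares R w') (weightedSumSquares R w) := by
  refine ⟨⟨LinearEquiv.funCongrLeft R R e.symm, fun x => ?_⟩⟩
  simp only [weightedSumSquares_apply]
  exact (Fintype.sum_equiv e _ _ fun i => by simp [h]).symm

theorem weightedSumSquares_equivalent_of_eq_sq_add_mul_sq {K : Type*} [Field K]
    {p q a b c d : K} (hd : a ^ 2 + c * b ^ 2 = d) (hd0 : d ≠ 0) :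
    Equivalent (weightedSumSquares K ![p, q, d, d * c]) (weightedSumSquares K ![1, p, q, c]) := by
  -- On the last two coordinates: multiplication by `a + b√-c`, whose norm is `d`.
  refine ⟨{ toFun := fun y => ![a * y 2 - c * b * y 3, y 0, y 1, b * y 2 + a * y 3],
            invFun := fun x => ![x 1, x 2, (a * x 0 + c * b * x 3) / d, (a * x 3 - b * x 0) / d],
            map_add' := ?_, map_smul' := ?_, left_inv := ?_, right_inv := ?_,
            map_app' := ?_ }⟩
  · intro x y
    funext i
    fin_cases i <;> simp <;> ring
  · intro r x
    funext i
    fin_cases i <;> simp <;> ring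
  · intro y
    funext i
    fin_cases i <;> simp <;> field_simp <;> rw [← hd] <;> ring
  · intro x
    funext i
    fin_cases i <;> simp <;> field_simp <;> rw [← hd] <;> ring
  · intro y
    simp [weightedSumSquares_apply, Fin.sum_univ_four, ← hd]
    ring

end QuadraticMap

open QuadraticMap

theorem stmt_0_general (k : Type*) [Field k] [IsAlgClosed k] :
    let K := FractionRing (MvPolynomial (Fin 2) k)
    let u : K := algebraMap (MvPolynomial (Fin 2) k) K (X 0)
    let v : K := algebraMap (MvPolynomial (Fin 2) k) K (X 1)
    let f : K := u ^ 2 + v ^ 2 + 1 - 2 * (u * v + u + v)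
    (∃ w : K, QuadraticMap.Equivalent
        (QuadraticMap.weightedSumSquares K ![u, v, f, w])
        (QuadraticMap.weightedSumSquares K ![1, u, v, u * v])) ∧
    (∃ w : K, QuadraticMap.Equivalent
        (QuadraticMap.weightedSumSquares K ![v, u * v, f, w])
        (QuadraticMap.weightedSumSquares K ![1, u, v, u * v])) ∧
    (∃ w : K, QuadraticMap.Equivalent
        (QuadraticMap.weightedSumSquares K ![u, u * v, f, w])
        (QuadraticMap.weightedSumSquares K ![1, u, v, u * v])) ∧
    (∃ w : K, QuadraticMap.Equivalent
        (QuadraticMap.weightedSumSquares K ![u, v, u * v, w])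
        (QuadraticMap.weightedSumSquares K ![1, u, v, u * v])) := by
  intro K u v f
  obtain ⟨i, hi⟩ : ∃ i : K, i ^ 2 = -1 := by
    obtain ⟨i, hi⟩ := IsAlgClosed.exists_pow_nat_eq (-1 : k) two_pos
    exact ⟨algebraMap k K i, by rw [← map_pow, hi, map_neg, map_one]⟩
  have hf0 : f ≠ 0 := by
    have hP : (X 0 ^ 2 + X 1 ^ 2 + 1 - 2 * (X 0 * X 1 + X 0 + X 1) : MvPolynomial (Fin 2) k)
        ≠ 0 := fun h => by simpa using congrArg (eval 0) h
    simpa [f, u, v, map_ofNat] using (IsFractionRing.injective (MvPolynomial (Fin 2) k) K).ne hP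
  have huv : (u + v - 1) ^ 2 + u * v * (2 * i) ^ 2 = f := by linear_combination 4 * u * v * hi
  have hu : (u - v + 1) ^ 2 + u * (2 * i) ^ 2 = f := by linear_combination 4 * u * hi
  have hv : (u - v - 1) ^ 2 + v * (2 * i) ^ 2 = f := by linear_combination 4 * v * hi
  refine ⟨⟨f * (u * v), weightedSumSquares_equivalent_of_eq_sq_add_mul_sq huv hf0⟩,
    ⟨f * u, (weightedSumSquares_equivalent_of_eq_sq_add_mul_sq hu hf0).trans
      (equivalent_weightedSumSquares_of_perm ((Equiv.swap 1 2).trans (Equiv.swap 1 3))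
        fun i => by fin_cases i <;> rfl)⟩,
    ⟨f * v, (weightedSumSquares_equivalent_of_eq_sq_add_mul_sq hv hf0).trans
      (equivalent_weightedSumSquares_of_perm (Equiv.swap 2 3) fun i => by fin_cases i <;> rfl)⟩,
    ⟨1, equivalent_weightedSumSquares_of_perm (finRotate 4) fun i => by fin_cases i <;> rfl⟩⟩

/-- Let `k` be an algebraically closed field of characteristic different from
`2` and let `K = k(u,v)` be the field of rational functions in two variables over `k` (the
fraction field of the polynomial ring `k[u,v]`).  Set `f := u² + v² + 1 − 2(uv + u + v) ∈ K`.
Then each of the ternary diagonal quadratic forms `⟨u, v, f⟩`, `⟨v, uv, f⟩`, `⟨u, uv, f⟩` and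
`⟨u, v, uv⟩` over `K` is a subform of the 2-fold Pfister form `⟨1, u, v, uv⟩`; that is, for
each of these ternary diagonal forms `q` there exists `w ∈ K` such that the quaternary
diagonal form obtained from `q` by appending the entry `w` is equivalent (isometric) over
`K` to the diagonal form `⟨1, u, v, uv⟩`. -/
theorem stmt_0 (k : Type*) [Field k] [IsAlgClosed k] (hchar : ringChar k ≠ 2) :
    let K := FractionRing (MvPolynomial (Fin 2) k)
    let u : K := algebraMap (MvPolynomial (Fin 2) k) K (X 0)
    let v : K := algebraMap (MvPolynomial (Fin 2) k) K (X 1)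
    let f : K := u ^ 2 + v ^ 2 + 1 - 2 * (u * v + u + v)
    (∃ w : K, QuadraticMap.Equivalent
        (QuadraticMap.weightedSumSquares K ![u, v, f, w])
        (QuadraticMap.weightedSumSquares K ![1, u, v, u * v])) ∧
    (∃ w : K, QuadraticMap.Equivalent
        (QuadraticMap.weightedSumSquares K ![v, u * v, f, w])
        (QuadraticMap.weightedSumSquares K ![1, u, v, u * v])) ∧
    (∃ w : K, QuadraticMap.Equivalent
        (QuadraticMap.weightedSumSquares K ![u, u * v, f, w])
        (QuadraticMap.weightedSumSquares K ![1, u, v, u * v])) ∧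
    (∃ w : K, QuadraticMap.Equivalent
        (QuadraticMap.weightedSumSquares K ![u, v, u * v, w])
        (QuadraticMap.weightedSumSquares K ![1, u, v, u * v])) :=
  stmt_0_general k
end

section
/- Let K be a field of characteristic different from 2, let f ≥ 2 be an integer, let t ∈ K with t ≠ 0, and let g ∈ K[X] be a polynomial whose coefficient in degree f and whose coefficient in degree f−1 are both nonzero. Then the polynomial g² + 4t·X^f is not the square of any polynomial in K[X]. -/
open Polynomial

/-- A polynomial whose trailing degree equals its degree is a monomial. -/
lemma monomial_of_td_eq_deg {K : Type*} [Field K] (u : Polynomial K)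
    (h : u.natTrailingDegree = u.natDegree) :
    u = Polynomial.C (u.coeff u.natDegree) * Polynomial.X ^ u.natDegree := by
  ext n
  rw [Polynomial.coeff_C_mul, Polynomial.coeff_X_pow]
  rcases lt_trichotomy n u.natDegree with hn | hn | hn
  · rw [if_neg hn.ne, mul_zero, Polynomial.coeff_eq_zero_of_lt_natTrailingDegree (h ▸ hn)]
  · simp [hn]
  · rw [if_neg hn.ne', mul_zero, Polynomial.coeff_eq_zero_of_natDegree_lt hn]

/-- Let `K` be a field of characteristic different from `2`, let `f ≥ 2` be an
integer, let `t ∈ K` with `t ≠ 0`, and let `g ∈ K[X]` be a polynomial whose coefficient in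
degree `f` and whose coefficient in degree `f − 1` are both nonzero.  Then the polynomial
`g² + 4t·X^f` is not the square of any polynomial in `K[X]`. -/
theorem stmt_2 (K : Type*) [Field K] (hchar : ringChar K ≠ 2)
    (f : ℕ) (hf : 2 ≤ f) (t : K) (ht : t ≠ 0) (g : Polynomial K)
    (hgf : g.coeff f ≠ 0) (hgf' : g.coeff (f - 1) ≠ 0) :
    ¬ ∃ p : Polynomial K, g ^ 2 + Polynomial.C (4 * t) * Polynomial.X ^ f = p ^ 2 := by
  classical
  rintro ⟨p, h⟩
  have two_ne : (2 : K) ≠ 0 := Ring.two_ne_zero hchar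
  have h4 : (4 : K) * t ≠ 0 := by
    have h4' : (4 : K) = 2 * 2 := by norm_num
    exact mul_ne_zero (by rw [h4']; exact mul_ne_zero two_ne two_ne) ht
  have key : (p - g) * (p + g) = Polynomial.C (4 * t) * Polynomial.X ^ f := by
    linear_combination -h
  set u := p - g with hu
  set v := p + g with hv
  have hrhs : Polynomial.C (4 * t) * Polynomial.X ^ f ≠ 0 :=
    mul_ne_zero (Polynomial.C_ne_zero.mpr h4) (pow_ne_zero f Polynomial.X_ne_zero)
  have hune : u ≠ 0 := fun h0 => hrhs (by rw [← key, h0, zero_mul])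
  have hvne : v ≠ 0 := fun h0 => hrhs (by rw [← key, h0, mul_zero])
  have hmono : Polynomial.C (4 * t) * Polynomial.X ^ f = Polynomial.monomial f (4 * t) := by
    rw [Polynomial.C_mul_X_pow_eq_monomial]
  have hdeg : u.natDegree + v.natDegree = f := by
    rw [← Polynomial.natDegree_mul hune hvne, key, hmono, Polynomial.natDegree_monomial,
      if_neg h4]
  have htdeg : u.natTrailingDegree + v.natTrailingDegree = f := by
    rw [← Polynomial.natTrailingDegree_mul hune hvne, key, hmono,
      Polynomial.natTrailingDegree_monomial h4]
  have hule := Polynomial.natTrailingDegree_le_natDegree u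
  have hvle := Polynomial.natTrailingDegree_le_natDegree v
  have hueq : u.natTrailingDegree = u.natDegree := by omega
  have hveq : v.natTrailingDegree = v.natDegree := by omega
  set a := u.natDegree with ha
  set b := v.natDegree with hb
  set c := u.coeff a with hc
  set d := v.coeff b with hd
  have hum := monomial_of_td_eq_deg u hueq
  have hvm := monomial_of_td_eq_deg v hveq
  have h2g : Polynomial.C (2 : K) * g = Polynomial.C d * Polynomial.X ^ b -
      Polynomial.C c * Polynomial.X ^ a := by
    rw [← hum, ← hvm, hu, hv]
    ring_nf
    rw [map_ofNat]
    ring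
  have hcoeff : ∀ n : ℕ, 2 * g.coeff n =
      (if n = b then d else 0) - (if n = a then c else 0) := by
    intro n
    have := congrArg (fun q => Polynomial.coeff q n) h2g
    simpa [Polynomial.coeff_C_mul, Polynomial.coeff_sub, Polynomial.coeff_X_pow,
      mul_ite, mul_one, mul_zero] using this
  -- coeff f: forces a = f or b = f
  have hF := hcoeff f
  have habf : a = f ∨ b = f := by
    by_contra hcon
    push_neg at hcon
    rw [if_neg (fun hq => hcon.2 hq.symm), if_neg (fun hq => hcon.1 hq.symm),
      sub_zero] at hF
    exact hgf ((mul_eq_zero.mp hF).resolve_left two_ne)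
  have hF' := hcoeff (f - 1)
  have hne1 : f - 1 ≠ 0 := by omega
  have hab : (a = f ∧ b = 0) ∨ (a = 0 ∧ b = f) := by
    rcases habf with h1 | h1
    · exact Or.inl ⟨h1, by omega⟩
    · exact Or.inr ⟨by omega, h1⟩
  have hzero : 2 * g.coeff (f - 1) = 0 := by
    rcases hab with ⟨h1, h2⟩ | ⟨h1, h2⟩ <;>
      · rw [if_neg (by omega), if_neg (by omega), sub_zero] at hF'
        exact hF'
  exact hgf' ((mul_eq_zero.mp hzero).resolve_left two_ne)
end

section
/- Let K be a field of characteristic different from 2 and let t ∈ K with t ≠ 0. In the polynomial ring K[y₀, y₂, x₁, x₂, x₃] in five variables, set Q_U := y₂ + y₀y₂x₁² + y₀x₂² + (y₀² + 1 + y₂² − 2(y₀ + y₀y₂ + y₂))·x₃². Then Δ := Q_U² + 4t·x₂²·y₀² is not the square of any element of K[y₀, y₂, x₁, x₂, x₃]. -/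
open MvPolynomial

/-- Let `K` be a field of characteristic different from `2` and let `t ∈ K`
with `t ≠ 0`.  In the polynomial ring `K[y₀, y₂, x₁, x₂, x₃]` in five variables, set
`Q_U := y₂ + y₀y₂x₁² + y₀x₂² + (y₀² + 1 + y₂² − 2(y₀ + y₀y₂ + y₂))·x₃²`.
Then `Δ := Q_U² + 4t·x₂²·y₀²` is not the square of any element of `K[y₀, y₂, x₁, x₂, x₃]`.
Here the five variables `y₀, y₂, x₁, x₂, x₃` are `X 0, X 1, X 2, X 3, X 4`. -/
theorem stmt_4 (K : Type*) [Field K] (hchar : ringChar K ≠ 2) (t : K) (ht : t ≠ 0) :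
    let y0 : MvPolynomial (Fin 5) K := X 0
    let y2 : MvPolynomial (Fin 5) K := X 1
    let x1 : MvPolynomial (Fin 5) K := X 2
    let x2 : MvPolynomial (Fin 5) K := X 3
    let x3 : MvPolynomial (Fin 5) K := X 4
    let QU : MvPolynomial (Fin 5) K :=
      y2 + y0 * y2 * x1 ^ 2 + y0 * x2 ^ 2
        + (y0 ^ 2 + 1 + y2 ^ 2 - 2 * (y0 + y0 * y2 + y2)) * x3 ^ 2
    ¬ ∃ p : MvPolynomial (Fin 5) K, QU ^ 2 + C (4 * t) * x2 ^ 2 * y0 ^ 2 = p ^ 2 := by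
  intro y0 y2 x1 x2 x3 QU
  rintro ⟨p, hp⟩
  have h2 : (2 : K) ≠ 0 := Ring.two_ne_zero hchar
  have hp' : ((X 1 : MvPolynomial (Fin 5) K) + X 0 * X 1 * X 2 ^ 2 + X 0 * X 3 ^ 2
      + (X 0 ^ 2 + 1 + X 1 ^ 2 - 2 * (X 0 + X 0 * X 1 + X 1)) * X 4 ^ 2) ^ 2
      + C (4 * t) * X 3 ^ 2 * X 0 ^ 2 = p ^ 2 := hp
  -- specialize y0 ↦ 1, y2 ↦ 0, x1 ↦ 0, x2 ↦ X, x3 ↦ 0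
  set v : Fin 5 → Polynomial K := ![1, 0, 0, Polynomial.X, 0] with hv
  set q : Polynomial K := aeval v p with hqdef
  have key : (Polynomial.X : Polynomial K) ^ 2 * (Polynomial.X ^ 2 + Polynomial.C (4 * t))
      = q ^ 2 := by
    have h := congrArg (aeval v) hp'
    simp only [map_add, map_mul, map_pow, map_sub, map_one, map_ofNat, aeval_X, algHom_C,
      Polynomial.algebraMap_eq, hv, Matrix.cons_val_zero, Matrix.cons_val_one, Matrix.head_cons,
      Matrix.cons_val_two, Matrix.tail_cons, Matrix.cons_val_three, Matrix.cons_val_four] at h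
    rw [← hqdef] at h
    rw [← h, map_mul, map_ofNat]; ring
  have hXq : Polynomial.X ∣ q := by
    refine (Polynomial.prime_X (R := K)).dvd_of_dvd_pow (n := 2) ?_
    exact ⟨Polynomial.X * (Polynomial.X ^ 2 + Polynomial.C (4 * t)), by rw [← key]; ring⟩
  obtain ⟨r, hr⟩ := hXq
  have hr2 : (Polynomial.X : Polynomial K) ^ 2 + Polynomial.C (4 * t) = r ^ 2 := by
    have hx2 : ((Polynomial.X : Polynomial K) ^ 2) ≠ 0 :=
      pow_ne_zero _ Polynomial.X_ne_zero
    apply mul_left_cancel₀ hx2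
    rw [key, hr]; ring
  have h4 : (4 : K) ≠ 0 := by
    have : (4 : K) = 2 * 2 := by norm_num
    rw [this]; exact mul_ne_zero h2 h2
  have hnd : r.natDegree = 1 := by
    have hdeg : (r ^ 2).natDegree = 2 := by
      rw [← hr2]
      simpa using Polynomial.natDegree_X_pow_add_C (R := K) (n := 2) (r := 4 * t)
    rw [Polynomial.natDegree_pow] at hdeg
    omega
  have hrX : r = Polynomial.C (r.coeff 1) * Polynomial.X + Polynomial.C (r.coeff 0) :=
    Polynomial.eq_X_add_C_of_natDegree_le_one (by omega)
  set a := r.coeff 1 with ha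
  set b := r.coeff 0 with hb
  rw [hrX] at hr2
  have hexp : (Polynomial.C a * Polynomial.X + Polynomial.C b) ^ 2
      = Polynomial.C (a ^ 2) * Polynomial.X ^ 2 + Polynomial.C (2 * a * b) * Polynomial.X
        + Polynomial.C (b ^ 2) := by
    simp only [map_mul, map_pow, map_ofNat]
    ring
  rw [hexp] at hr2
  have c2 : (1 : K) = a ^ 2 := by
    have := congrArg (fun f => Polynomial.coeff f 2) hr2
    simp only [Polynomial.coeff_add, Polynomial.coeff_C_mul, Polynomial.coeff_X_pow,
      Polynomial.coeff_C, Polynomial.coeff_X, Polynomial.coeff_X_one] at this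
    simpa using this
  have c1 : (0 : K) = 2 * a * b := by
    have := congrArg (fun f => Polynomial.coeff f 1) hr2
    simp only [Polynomial.coeff_add, Polynomial.coeff_C_mul, Polynomial.coeff_X_pow,
      Polynomial.coeff_C, Polynomial.coeff_X, Polynomial.coeff_X_one] at this
    simpa using this
  have c0 : 4 * t = b ^ 2 := by
    have := congrArg (fun f => Polynomial.coeff f 0) hr2
    simp only [Polynomial.coeff_add, Polynomial.coeff_C_mul, Polynomial.coeff_X_pow,
      Polynomial.coeff_C, Polynomial.coeff_X, Polynomial.coeff_X_one] at this
    simpa using this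
  have hane : a ≠ 0 := by
    intro h; rw [h] at c2; simp at c2
  have hb0 : b = 0 := by
    rcases mul_eq_zero.mp c1.symm with h | h
    · rcases mul_eq_zero.mp h with h' | h'
      · exact absurd h' h2
      · exact absurd h' hane
    · exact h
  rw [hb0] at c0
  simp at c0
  rcases c0 with h | h
  · exact h4 h
  · exact ht h
end

section
/- Let K be a field of characteristic different from 2 and let t ∈ K with t ≠ 0. In the polynomial ring K[y₀, y₂, x₁, x₂, x₃, a] in six variables, set Q_U := y₂ + y₀y₂x₁² + y₀x₂² + (y₀² + 1 + y₂² − 2(y₀ + y₀y₂ + y₂))·x₃². Then the polynomial a² + Q_U·a − t·x₂²·y₀² is irreducible in K[y₀, y₂, x₁, x₂, x₃, a]. -/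
/-!
Singling out the variable `a`, the polynomial is the monic quadratic
`a² + Q_U a - t x₂² y₀²` over `K[y₀, y₂, x₁, x₂, x₃]`, and a monic polynomial is irreducible as
soon as some specialisation of its coefficients is. The substitution `y₀, x₂ ↦ 1`, `y₂ ↦ T - 1`,
`x₁, x₃ ↦ 0` gives `a² + T a - t` over `K[T]`. A factorisation `(a + c₁)(a + c₂)` of it has
`c₁ c₂ = -t`, a unit, so `c₁` and `c₂` are constants, which contradicts `c₁ + c₂ = T`.
-/

namespace Polynomial

variable {R : Type*} [CommRing R]

theorem monic_X_sq_add_C_mul_X_sub_C [Nontrivial R] (b c : R) :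
    (X ^ 2 + C b * X - C c : R[X]).Monic := by
  monicity!

theorem natDegree_X_sq_add_C_mul_X_sub_C [Nontrivial R] (b c : R) :
    (X ^ 2 + C b * X - C c : R[X]).natDegree = 2 := by
  compute_degree!

theorem irreducible_X_sq_add_C_X_mul_X_sub_C_C [IsDomain R] {u : R} (hu : IsUnit u) :
    Irreducible (X ^ 2 + C X * X - C (C u) : R[X][X]) := by
  by_contra hirr
  obtain ⟨c₁, c₂, hmul, hadd⟩ :=
    ((monic_X_sq_add_C_mul_X_sub_C _ _).not_irreducible_iff_exists_add_mul_eq_coeff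
      (natDegree_X_sq_add_C_mul_X_sub_C _ _)).mp hirr
  have hunit : IsUnit (c₁ * c₂) := by
    rw [← hmul]
    simpa [coeff_C] using (hu.map C).neg
  obtain ⟨r₁, -, rfl⟩ := isUnit_iff.mp (isUnit_of_mul_isUnit_left hunit)
  obtain ⟨r₂, -, rfl⟩ := isUnit_iff.mp (isUnit_of_mul_isUnit_right hunit)
  simpa using congrArg (coeff · 1) hadd

theorem irreducible_X_sq_add_C_mul_X_sub_C_of_map [IsDomain R] {S : Type*} [CommRing S]
    [IsDomain S] (φ : R →+* S[X]) {b c : R} {u : S} (hu : IsUnit u) (hb : φ b = X)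
    (hc : φ c = C u) : Irreducible (X ^ 2 + C b * X - C c : R[X]) :=
  (monic_X_sq_add_C_mul_X_sub_C b c).irreducible_of_irreducible_map φ _ <| by
    simpa [hb, hc] using irreducible_X_sq_add_C_X_mul_X_sub_C_C hu

end Polynomial

open MvPolynomial

theorem stmt_5_general (K : Type*) [Field K] (t : K) (ht : t ≠ 0) :
    let y0 : MvPolynomial (Fin 6) K := X 0
    let y2 : MvPolynomial (Fin 6) K := X 1
    let x1 : MvPolynomial (Fin 6) K := X 2
    let x2 : MvPolynomial (Fin 6) K := X 3
    let x3 : MvPolynomial (Fin 6) K := X 4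
    let a : MvPolynomial (Fin 6) K := X 5
    let QU : MvPolynomial (Fin 6) K :=
      y2 + y0 * y2 * x1 ^ 2 + y0 * x2 ^ 2
        + (y0 ^ 2 + 1 + y2 ^ 2 - 2 * (y0 + y0 * y2 + y2)) * x3 ^ 2
    Irreducible (a ^ 2 + QU * a - C t * x2 ^ 2 * y0 ^ 2) := by
  intro y0 y2 x1 x2 x3 a QU
  let e : MvPolynomial (Fin 6) K ≃ₐ[K] Polynomial (MvPolynomial (Fin 5) K) :=
    (renameEquiv K (finSuccEquiv' (Fin.last 5))).trans (optionEquivLeft K (Fin 5))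
  have he_castSucc (i : Fin 5) : e (X i.castSucc) = Polynomial.C (X i) := by
    simp only [e, AlgEquiv.trans_apply, renameEquiv_apply, rename_X,
      finSuccEquiv'_last_apply_castSucc, optionEquivLeft_X_some]
  have he_last : e a = Polynomial.X := by simp [e, a]
  have he_C : e (C t) = Polynomial.C (C t) := by simp [e]
  have he : e (a ^ 2 + QU * a - C t * x2 ^ 2 * y0 ^ 2) = Polynomial.X ^ 2
      + Polynomial.C (X 1 + X 0 * X 1 * X 2 ^ 2 + X 0 * X 3 ^ 2
        + (X 0 ^ 2 + 1 + X 1 ^ 2 - 2 * (X 0 + X 0 * X 1 + X 1)) * X 4 ^ 2) * Polynomial.X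
      - Polynomial.C (C t * X 3 ^ 2 * X 0 ^ 2) := by
    simp only [QU, map_add, map_sub, map_mul, map_pow, map_ofNat, map_one, he_last, he_C,
      show e y0 = _ from he_castSucc 0, show e y2 = _ from he_castSucc 1,
      show e x1 = _ from he_castSucc 2, show e x2 = _ from he_castSucc 3,
      show e x3 = _ from he_castSucc 4]
  let φ : MvPolynomial (Fin 5) K →+* Polynomial K :=
    eval₂Hom Polynomial.C ![1, Polynomial.X - 1, 0, 1, 0]
  rw [← MulEquiv.irreducible_iff e.toMulEquiv]
  change Irreducible (e _)
  rw [he]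
  refine Polynomial.irreducible_X_sq_add_C_mul_X_sub_C_of_map φ ht.isUnit ?_ ?_
  · simp [φ]
  · simp [φ]

/-- Let `K` be a field of characteristic different from `2` and let `t ∈ K`
with `t ≠ 0`.  In the polynomial ring `K[y₀, y₂, x₁, x₂, x₃, a]` in six variables, set
`Q_U := y₂ + y₀y₂x₁² + y₀x₂² + (y₀² + 1 + y₂² − 2(y₀ + y₀y₂ + y₂))·x₃²`.
Then the polynomial `a² + Q_U·a − t·x₂²·y₀²` is irreducible in `K[y₀, y₂, x₁, x₂, x₃, a]`.
Here the six variables `y₀, y₂, x₁, x₂, x₃, a` are `X 0, …, X 5`. -/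
theorem stmt_5 (K : Type*) [Field K] (hchar : ringChar K ≠ 2) (t : K) (ht : t ≠ 0) :
    let y0 : MvPolynomial (Fin 6) K := X 0
    let y2 : MvPolynomial (Fin 6) K := X 1
    let x1 : MvPolynomial (Fin 6) K := X 2
    let x2 : MvPolynomial (Fin 6) K := X 3
    let x3 : MvPolynomial (Fin 6) K := X 4
    let a : MvPolynomial (Fin 6) K := X 5
    let QU : MvPolynomial (Fin 6) K :=
      y2 + y0 * y2 * x1 ^ 2 + y0 * x2 ^ 2
        + (y0 ^ 2 + 1 + y2 ^ 2 - 2 * (y0 + y0 * y2 + y2)) * x3 ^ 2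
    Irreducible (a ^ 2 + QU * a - C t * x2 ^ 2 * y0 ^ 2) :=
  stmt_5_general K t ht
end

section
/- Let K be a field of characteristic different from 2 and let s, t ∈ K with s ≠ −1. In the polynomial ring K[y₀, y₂, a, x₁, X₂, x₃] in six variables, set P := y₀y₂x₁² + a·y₀·(a − t·y₀)·X₂² + (y₀² + 1 + y₂² − 2(y₀ + y₀y₂ + y₂))·x₃². Then Δ := (x₁² − s·y₀²)² − 4·(y₂ + a)·P is not the square of any element of K[y₀, y₂, a, x₁, X₂, x₃]. -/
open MvPolynomial

lemma aux_not_sq (K : Type*) [Field K] (hchar : ringChar K ≠ 2) (q : Polynomial K) :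
    q ^ 2 ≠ Polynomial.X ^ 4 - 4 * Polynomial.X ^ 2 := by
  intro h
  have h2 : (2 : K) ≠ 0 := Ring.two_ne_zero hchar
  have h4 : (4 : K) ≠ 0 := by
    intro h4; apply h2
    have : (4 : K) = 2 * 2 := by norm_num
    rcases mul_eq_zero.mp (this ▸ h4) with h | h <;> exact h
  have hc : ∀ n, (q ^ 2).coeff n = (Polynomial.X ^ 4 - 4 * Polynomial.X ^ 2 : Polynomial K).coeff n :=
    fun n => by rw [h]
  have h0 := hc 0
  have h2' := hc 2
  have h3 := hc 3
  simp [pow_two, Polynomial.coeff_mul, Finset.Nat.sum_antidiagonal_eq_sum_range_succ_mk,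
    Finset.sum_range_succ, Polynomial.coeff_X_pow, Polynomial.coeff_X] at h0 h2' h3
  rw [h0] at h2' h3
  simp at h2' h3
  have hq1 : q.coeff 1 ≠ 0 := by
    intro hz; rw [hz] at h2'; simp at h2'
    exact h4 h2'
  have hq2 : q.coeff 2 = 0 := by
    have : 2 * (q.coeff 1 * q.coeff 2) = 0 := by linear_combination h3
    rcases mul_eq_zero.mp this with hh | hh
    · exact absurd hh h2
    · exact (mul_eq_zero.mp hh).resolve_left hq1
  have hrhs : (Polynomial.X ^ 4 - 4 * Polynomial.X ^ 2 : Polynomial K).natDegree = 4 := by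
    compute_degree!
  have hqne : q ≠ 0 := by
    intro hz; rw [hz] at h; simp at h
    have := congrArg (Polynomial.coeff · 4) h
    simp [Polynomial.coeff_X_pow] at this
  have hdeg : q.natDegree = 2 := by
    have : (q ^ 2).natDegree = 4 := by rw [h, hrhs]
    rw [Polynomial.natDegree_pow] at this
    omega
  have := Polynomial.leadingCoeff_ne_zero.mpr hqne
  rw [Polynomial.leadingCoeff, hdeg, hq2] at this
  exact this rfl

/-- Let `K` be a field of characteristic different from `2` and let
`s, t ∈ K` with `s ≠ −1`.  In the polynomial ring `K[y₀, y₂, a, x₁, X₂, x₃]` in six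
variables, set `P := y₀y₂x₁² + a·y₀·(a − t·y₀)·X₂² + (y₀² + 1 + y₂² − 2(y₀ + y₀y₂ + y₂))·x₃²`.
Then `Δ := (x₁² − s·y₀²)² − 4·(y₂ + a)·P` is not the square of any element of
`K[y₀, y₂, a, x₁, X₂, x₃]`.  Here the six variables `y₀, y₂, a, x₁, X₂, x₃` are
`X 0, …, X 5`. -/
theorem stmt_7 (K : Type*) [Field K] (hchar : ringChar K ≠ 2) (s t : K) (hs : s ≠ -1) :
    let y0 : MvPolynomial (Fin 6) K := X 0
    let y2 : MvPolynomial (Fin 6) K := X 1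
    let a : MvPolynomial (Fin 6) K := X 2
    let x1 : MvPolynomial (Fin 6) K := X 3
    let X2 : MvPolynomial (Fin 6) K := X 4
    let x3 : MvPolynomial (Fin 6) K := X 5
    let P : MvPolynomial (Fin 6) K :=
      y0 * y2 * x1 ^ 2 + a * y0 * (a - C t * y0) * X2 ^ 2
        + (y0 ^ 2 + 1 + y2 ^ 2 - 2 * (y0 + y0 * y2 + y2)) * x3 ^ 2
    ¬ ∃ p : MvPolynomial (Fin 6) K,
        (x1 ^ 2 - C s * y0 ^ 2) ^ 2 - 4 * (y2 + a) * P = p ^ 2 := by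
  intro y0 y2 a x1 X2 x3 P
  rintro ⟨p, hp⟩
  have h := congrArg (aeval (![0, 0, 1, Polynomial.X, 0, Polynomial.X] : Fin 6 → Polynomial K)) hp
  simp only [y0, y2, a, x1, X2, x3, P, map_sub, map_add, map_mul, map_pow, map_one,
    map_ofNat, aeval_X, aeval_C, Matrix.cons_val_zero, Matrix.cons_val_one, Matrix.head_cons,
    Matrix.cons_val_two, Matrix.tail_cons, Matrix.cons_val_three, Matrix.cons_val_four] at h
  apply aux_not_sq K hchar (aeval (![0, 0, 1, Polynomial.X, 0, Polynomial.X] : Fin 6 → Polynomial K) p)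
  rw [show (![0, 0, 1, Polynomial.X, 0, Polynomial.X] : Fin 6 → Polynomial K) 5 = Polynomial.X from rfl] at h
  rw [← h]
  ring
end

section
/- Let K be a field of characteristic different from 2 and let s, t ∈ K with s ≠ −1. In the polynomial ring K[y₀, y₂, a, x₁, X₂, x₃, c] in seven variables, set P := y₀y₂x₁² + a·y₀·(a − t·y₀)·X₂² + (y₀² + 1 + y₂² − 2(y₀ + y₀y₂ + y₂))·x₃². Then the polynomial (y₂ + a)·c² + (x₁² − s·y₀²)·c + P is irreducible in K[y₀, y₂, a, x₁, X₂, x₃, c]. -/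
open MvPolynomial

section Aux

variable {K : Type*} [CommRing K] [IsDomain K]

lemma myDegreeOf_ne_zero_of_mem_vars {σ : Type*} {p : MvPolynomial σ K} {i : σ}
    (h : i ∈ p.vars) : p.degreeOf i ≠ 0 := by
  obtain ⟨d, hd, hi⟩ := (mem_vars i).mp h
  have h1 : 1 ≤ d i := Nat.one_le_iff_ne_zero.mpr (Finsupp.mem_support_iff.mp hi)
  have := monomial_le_degreeOf i hd
  omega

lemma myDegreeOf_eq_zero_of_not_mem_vars {σ : Type*} {p : MvPolynomial σ K} {i : σ}
    (h : i ∉ p.vars) : p.degreeOf i = 0 := by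
  rw [degreeOf_eq_sup]
  apply Nat.eq_zero_of_le_zero
  rw [Finset.sup_le_iff]
  intro m hm
  by_contra hmi
  exact h ((mem_vars i).mpr ⟨m, hm, Finsupp.mem_support_iff.mpr ((by omega : ¬ m i = 0))⟩)

lemma myDegreeOf_zero_mul {n : ℕ} {p q : MvPolynomial (Fin (n + 1)) K}
    (hp : p ≠ 0) (hq : q ≠ 0) :
    degreeOf 0 (p * q) = degreeOf 0 p + degreeOf 0 q := by
  have hpe : finSuccEquiv K n p ≠ 0 := fun h => hp (by
    have := congrArg (finSuccEquiv K n).symm h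
    simpa using this)
  have hqe : finSuccEquiv K n q ≠ 0 := fun h => hq (by
    have := congrArg (finSuccEquiv K n).symm h
    simpa using this)
  rw [← natDegree_finSuccEquiv, ← natDegree_finSuccEquiv, ← natDegree_finSuccEquiv, map_mul]
  exact Polynomial.natDegree_mul hpe hqe

lemma myDegreeOf_mul {n : ℕ} (i : Fin (n + 1)) {p q : MvPolynomial (Fin (n + 1)) K}
    (hp : p ≠ 0) (hq : q ≠ 0) :
    degreeOf i (p * q) = degreeOf i p + degreeOf i q := by
  classical
  set e : Fin (n + 1) ≃ Fin (n + 1) := Equiv.swap 0 i with he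
  have key : ∀ r : MvPolynomial (Fin (n + 1)) K, degreeOf i r = degreeOf 0 (rename e r) := by
    intro r
    have := degreeOf_rename_of_injective (p := r) (f := e) e.injective i
    rw [← this, he, Equiv.swap_apply_right]
  have hrp : rename e p ≠ 0 := fun h => hp (by
    have := (rename_injective (R := K) e e.injective)
    exact this (by simpa using h))
  have hrq : rename e q ≠ 0 := fun h => hq (rename_injective (R := K) e e.injective (by simpa using h))
  rw [key, key, key, map_mul]
  exact myDegreeOf_zero_mul hrp hrq

lemma myVars_subset_of_dvd {n : ℕ} {p q : MvPolynomial (Fin (n + 1)) K}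
    (h : p ∣ q) (hq : q ≠ 0) : p.vars ⊆ q.vars := by
  obtain ⟨w, rfl⟩ := h
  have hp : p ≠ 0 := fun h => hq (by simp [h])
  have hw : w ≠ 0 := fun h => hq (by simp [h])
  intro i hi
  by_contra hiq
  have h0 := myDegreeOf_eq_zero_of_not_mem_vars hiq
  rw [myDegreeOf_mul i hp hw] at h0
  exact myDegreeOf_ne_zero_of_mem_vars hi (by omega)

/-- Irreducibility of `C A * X^2 + C B` over a domain, given no square root of `-(A*B)`
and coprimality of `A` and `B`. -/
lemma quad_irred {R : Type*} [CommRing R] [IsDomain R] (A B : R) (hA : A ≠ 0)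
    (hsq : ∀ h : R, h ^ 2 ≠ -(A * B))
    (hcop : ∀ u : R, u ∣ A → u ∣ B → IsUnit u) :
    Irreducible (Polynomial.C A * Polynomial.X ^ 2 + Polynomial.C B) := by
  classical
  set Q : Polynomial R := Polynomial.C A * Polynomial.X ^ 2 + Polynomial.C B with hQ
  have hQform : Q = Polynomial.C A * Polynomial.X ^ 2 + Polynomial.C 0 * Polynomial.X
      + Polynomial.C B := by simp [hQ]
  have hQd : Q.natDegree = 2 := by rw [hQform]; exact Polynomial.natDegree_quadratic hA
  have hc2 : Q.coeff 2 = A := by simp [hQ, Polynomial.coeff_X_pow]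
  have hc1 : Q.coeff 1 = 0 := by simp [hQ, Polynomial.coeff_X_pow]
  have hc0 : Q.coeff 0 = B := by simp [hQ, Polynomial.coeff_X_pow]
  have hQ0 : Q ≠ 0 := fun h => hA (by rw [← hc2, h, Polynomial.coeff_zero])
  constructor
  · intro h
    have := Polynomial.natDegree_eq_zero_of_isUnit h
    omega
  · intro f g hfg
    have hf0 : f ≠ 0 := fun h => hQ0 (by rw [hfg, h, zero_mul])
    have hg0 : g ≠ 0 := fun h => hQ0 (by rw [hfg, h, mul_zero])
    have hdeg : f.natDegree + g.natDegree = 2 := by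
      rw [← Polynomial.natDegree_mul hf0 hg0, ← hfg, hQd]
    rcases Nat.lt_or_ge f.natDegree 1 with hf1 | hf1
    · -- f constant
      left
      have hf : f = Polynomial.C (f.coeff 0) :=
        Polynomial.eq_C_of_natDegree_eq_zero (by omega)
      set u := f.coeff 0
      have hdvdA : u ∣ A := by
        refine ⟨g.coeff 2, ?_⟩
        rw [← hc2, hfg, hf, Polynomial.coeff_C_mul]
      have hdvdB : u ∣ B := by
        refine ⟨g.coeff 0, ?_⟩
        rw [← hc0, hfg, hf, Polynomial.coeff_C_mul]
      rw [hf]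
      exact Polynomial.isUnit_C.mpr (hcop u hdvdA hdvdB)
    rcases Nat.lt_or_ge g.natDegree 1 with hg1 | hg1
    · -- g constant
      right
      have hg : g = Polynomial.C (g.coeff 0) :=
        Polynomial.eq_C_of_natDegree_eq_zero (by omega)
      set u := g.coeff 0
      have hdvdA : u ∣ A := by
        refine ⟨f.coeff 2, ?_⟩
        rw [← hc2, hfg, hg, Polynomial.coeff_mul_C, mul_comm]
      have hdvdB : u ∣ B := by
        refine ⟨f.coeff 0, ?_⟩
        rw [← hc0, hfg, hg, Polynomial.coeff_mul_C, mul_comm]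
      rw [hg]
      exact Polynomial.isUnit_C.mpr (hcop u hdvdA hdvdB)
    · -- both linear
      exfalso
      have hfn : f.natDegree = 1 := by omega
      have hgn : g.natDegree = 1 := by omega
      have hf : f = Polynomial.C (f.coeff 1) * Polynomial.X + Polynomial.C (f.coeff 0) :=
        Polynomial.eq_X_add_C_of_natDegree_le_one (by omega)
      have hg : g = Polynomial.C (g.coeff 1) * Polynomial.X + Polynomial.C (g.coeff 0) :=
        Polynomial.eq_X_add_C_of_natDegree_le_one (by omega)
      set p := f.coeff 1; set q := f.coeff 0; set p' := g.coeff 1; set q' := g.coeff 0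
      have hprod : (Polynomial.C p * Polynomial.X + Polynomial.C q) *
          (Polynomial.C p' * Polynomial.X + Polynomial.C q')
          = Polynomial.C (p * p') * Polynomial.X ^ 2
          + Polynomial.C (p * q' + q * p') * Polynomial.X + Polynomial.C (q * q') := by
        simp only [Polynomial.C_mul, Polynomial.C_add]; ring
      have hexp : Q = Polynomial.C (p * p') * Polynomial.X ^ 2
          + Polynomial.C (p * q' + q * p') * Polynomial.X + Polynomial.C (q * q') := by
        rw [hfg, hf, hg, hprod]
      have e2 : A = p * p' := by
        have := congrArg (fun P => Polynomial.coeff P 2) hexp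
        simpa [hc2, Polynomial.coeff_X_pow, mul_assoc] using this
      have e1 : p * q' + q * p' = 0 := by
        have := congrArg (fun P => Polynomial.coeff P 1) hexp
        simp [hc1, Polynomial.coeff_X_pow, mul_assoc, mul_add, add_mul] at this
        linear_combination -this
      have e0 : B = q * q' := by
        have := congrArg (fun P => Polynomial.coeff P 0) hexp
        simpa [hc0, Polynomial.coeff_X_pow, mul_assoc] using this
      exact hsq (p * q') (by rw [e2, e0]; linear_combination (p * q') * e1)

end Aux

section Main

variable {K : Type*} [Field K]

private noncomputable def Adef (K : Type*) [Field K] : MvPolynomial (Fin 6) K :=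
  X 4 ^ 2 + 1 + X 0 ^ 2 - 2 * (X 4 + X 4 * X 0 + X 0)

private noncomputable def Bdef (s t : K) : MvPolynomial (Fin 6) K :=
  (X 0 + X 1) * X 5 ^ 2 + (X 2 ^ 2 - C s * X 4 ^ 2) * X 5 + X 4 * X 0 * X 2 ^ 2
    + X 1 * X 4 * (X 1 - C t * X 4) * X 3 ^ 2

lemma Adef_ne_zero : Adef K ≠ 0 := by
  intro h
  have h1 : constantCoeff (Adef K) = 1 := by
    simp [Adef]
  rw [h] at h1
  simp at h1

lemma Adef_vars : (Adef K).vars ⊆ {0, 4} := by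
  classical
  set g : Fin 2 → Fin 6 := ![0, 4] with hg
  have hre : rename g (X 1 ^ 2 + 1 + X 0 ^ 2 - 2 * (X 1 + X 1 * X 0 + X 0) :
      MvPolynomial (Fin 2) K) = Adef K := by
    simp only [map_add, map_sub, map_mul, map_pow, map_one, map_ofNat, rename_X, hg]
    simp [Adef]
  intro i hi
  rw [← hre] at hi
  obtain ⟨j, _, rfl⟩ := mem_vars_rename g _ hi
  fin_cases j <;> simp [hg]

lemma no_sqrt (s t : K) : ∀ h : MvPolynomial (Fin 6) K, h ^ 2 ≠ -(Adef K * Bdef s t) := by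
  intro h heq
  set φ : Fin 6 → Polynomial K := ![0, Polynomial.X, 0, 0, 0, 1] with hφ
  have v5 : (![0, Polynomial.X, 0, 0, 0, 1] : Fin 6 → Polynomial K) 5 = 1 := rfl
  have h1 : aeval φ (Adef K) = 1 := by simp [Adef, hφ, v5]; try ring
  have h2 : aeval φ (Bdef s t) = Polynomial.X := by simp [Bdef, hφ, v5]; try ring
  have h3 := congrArg (aeval φ) heq
  rw [map_pow, map_neg, map_mul, h1, h2, one_mul] at h3
  have h4 := congrArg Polynomial.natDegree h3
  rw [Polynomial.natDegree_pow, Polynomial.natDegree_neg, Polynomial.natDegree_X] at h4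
  omega

lemma coprime_AB (s t : K) :
    ∀ u : MvPolynomial (Fin 6) K, u ∣ Adef K → u ∣ Bdef s t → IsUnit u := by
  classical
  intro u huA huB
  have hvars : u.vars ⊆ ({0, 4} : Finset (Fin 6)) :=
    (myVars_subset_of_dvd (n := 5) huA Adef_ne_zero).trans Adef_vars
  set ψ : K → (Fin 6 → MvPolynomial (Fin 6) K) :=
    fun k => ![X 0, C k, 0, 0, X 4, 1] with hψ
  have hfix : ∀ k : K, aeval (ψ k) u = u := by
    intro k
    have := hom_congr_vars (f₁ := ((aeval (ψ k) : MvPolynomial (Fin 6) K →ₐ[K]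
        MvPolynomial (Fin 6) K) : MvPolynomial (Fin 6) K →+* MvPolynomial (Fin 6) K))
      (f₂ := RingHom.id _) (p₁ := u) (p₂ := u) ?_ ?_ rfl
    · exact this
    · ext x
      simp
    · intro i hi _
      have h2 := hvars hi
      simp only [Finset.mem_insert, Finset.mem_singleton] at h2
      rcases h2 with rfl | rfl <;> simp [hψ]
  have hd : ∀ k : K, u ∣ aeval (ψ k) (Bdef s t) := by
    intro k
    obtain ⟨v, hv⟩ := huB
    exact ⟨aeval (ψ k) v, by rw [hv, map_mul, hfix k]⟩
  have w5 : ∀ k : K, (![X 0, C k, 0, 0, X 4, 1] : Fin 6 → MvPolynomial (Fin 6) K) 5 = 1 :=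
    fun _ => rfl
  have wa : (![X 0, 0, 0, 0, X 4, 1] : Fin 6 → MvPolynomial (Fin 6) K) 5 = 1 := rfl
  have wb : (![X 0, 1, 0, 0, X 4, 1] : Fin 6 → MvPolynomial (Fin 6) K) 5 = 1 := rfl
  have hB0 : aeval (ψ 0) (Bdef s t) = X 0 - C s * X 4 ^ 2 := by
    simp [Bdef, hψ, w5, wa, wb]; try ring
  have hB1 : aeval (ψ 1) (Bdef s t) = X 0 + 1 - C s * X 4 ^ 2 := by
    simp [Bdef, hψ, w5, wa, wb]; try ring
  have hdd := dvd_sub (hd 1) (hd 0)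
  rw [hB0, hB1, show (X 0 + 1 - C s * X 4 ^ 2) - (X 0 - C s * X 4 ^ 2)
    = (1 : MvPolynomial (Fin 6) K) by ring] at hdd
  exact isUnit_of_dvd_one hdd

lemma main_irred (s t : K) :
    Irreducible ((X 1 + X 2) * (X 6 : MvPolynomial (Fin 7) K) ^ 2
      + (X 3 ^ 2 - C s * X 0 ^ 2) * X 6
      + (X 0 * X 1 * X 3 ^ 2 + X 2 * X 0 * (X 2 - C t * X 0) * X 4 ^ 2
        + (X 0 ^ 2 + 1 + X 1 ^ 2 - 2 * (X 0 + X 0 * X 1 + X 1)) * X 5 ^ 2)) := by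
  classical
  set E : MvPolynomial (Fin 7) K ≃ₐ[K] Polynomial (MvPolynomial (Fin 6) K) :=
    (renameEquiv K (Equiv.swap (0 : Fin 7) 5)).trans (finSuccEquiv K 6) with hE
  have happ : ∀ p : MvPolynomial (Fin 7) K,
      E p = finSuccEquiv K 6 (rename (Equiv.swap (0 : Fin 7) 5) p) := fun p => rfl
  have e0 : E (X 0 : MvPolynomial (Fin 7) K) = Polynomial.C (X 4) := by
    rw [happ, rename_X, Equiv.swap_apply_left,
      show (X (5 : Fin 7) : MvPolynomial (Fin 7) K) = X (Fin.succ 4) from rfl,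
      finSuccEquiv_X_succ]
  have e1 : E (X 1 : MvPolynomial (Fin 7) K) = Polynomial.C (X 0) := by
    rw [happ, rename_X, show Equiv.swap (0 : Fin 7) 5 1 = Fin.succ 0 by decide,
      finSuccEquiv_X_succ]
  have e2 : E (X 2 : MvPolynomial (Fin 7) K) = Polynomial.C (X 1) := by
    rw [happ, rename_X, show Equiv.swap (0 : Fin 7) 5 2 = Fin.succ 1 by decide,
      finSuccEquiv_X_succ]
  have e3 : E (X 3 : MvPolynomial (Fin 7) K) = Polynomial.C (X 2) := by
    rw [happ, rename_X, show Equiv.swap (0 : Fin 7) 5 3 = Fin.succ 2 by decide,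
      finSuccEquiv_X_succ]
  have e4 : E (X 4 : MvPolynomial (Fin 7) K) = Polynomial.C (X 3) := by
    rw [happ, rename_X, show Equiv.swap (0 : Fin 7) 5 4 = Fin.succ 3 by decide,
      finSuccEquiv_X_succ]
  have e5 : E (X 5 : MvPolynomial (Fin 7) K) = Polynomial.X := by
    rw [happ, rename_X, Equiv.swap_apply_right, finSuccEquiv_X_zero]
  have e6 : E (X 6 : MvPolynomial (Fin 7) K) = Polynomial.C (X 5) := by
    rw [happ, rename_X, show Equiv.swap (0 : Fin 7) 5 6 = Fin.succ 5 by decide,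
      finSuccEquiv_X_succ]
  have eC : ∀ r : K, E (C r) = Polynomial.C (C r) := by
    intro r
    rw [happ, rename_C]
    have := MvPolynomial.finSuccEquiv_apply (R := K) (n := 6) (C r)
    rw [this, eval₂Hom_C]
    rfl
  rw [← MulEquiv.irreducible_iff E]
  have hEQ : E ((X 1 + X 2) * (X 6 : MvPolynomial (Fin 7) K) ^ 2
      + (X 3 ^ 2 - C s * X 0 ^ 2) * X 6
      + (X 0 * X 1 * X 3 ^ 2 + X 2 * X 0 * (X 2 - C t * X 0) * X 4 ^ 2
        + (X 0 ^ 2 + 1 + X 1 ^ 2 - 2 * (X 0 + X 0 * X 1 + X 1)) * X 5 ^ 2))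
      = Polynomial.C (Adef K) * Polynomial.X ^ 2 + Polynomial.C (Bdef s t) := by
    simp only [map_add, map_mul, map_sub, map_pow, map_one, map_ofNat, e0, e1, e2, e3, e4,
      e5, e6, eC, Adef, Bdef]
    ring
  rw [hEQ]
  exact quad_irred (Adef K) (Bdef s t) Adef_ne_zero (no_sqrt s t) (coprime_AB s t)

end Main

/-- Let `K` be a field of characteristic different from `2` and let
`s, t ∈ K` with `s ≠ −1`.  In the polynomial ring `K[y₀, y₂, a, x₁, X₂, x₃, c]` in seven
variables, set `P := y₀y₂x₁² + a·y₀·(a − t·y₀)·X₂² + (y₀² + 1 + y₂² − 2(y₀ + y₀y₂ + y₂))·x₃²`.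
Then the polynomial `(y₂ + a)·c² + (x₁² − s·y₀²)·c + P` is irreducible in
`K[y₀, y₂, a, x₁, X₂, x₃, c]`.  Here the seven variables `y₀, y₂, a, x₁, X₂, x₃, c` are
`X 0, …, X 6`. -/
theorem stmt_8 (K : Type*) [Field K] (hchar : ringChar K ≠ 2) (s t : K) (hs : s ≠ -1) :
    let y0 : MvPolynomial (Fin 7) K := X 0
    let y2 : MvPolynomial (Fin 7) K := X 1
    let a : MvPolynomial (Fin 7) K := X 2
    let x1 : MvPolynomial (Fin 7) K := X 3
    let X2 : MvPolynomial (Fin 7) K := X 4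
    let x3 : MvPolynomial (Fin 7) K := X 5
    let c : MvPolynomial (Fin 7) K := X 6
    let P : MvPolynomial (Fin 7) K :=
      y0 * y2 * x1 ^ 2 + a * y0 * (a - C t * y0) * X2 ^ 2
        + (y0 ^ 2 + 1 + y2 ^ 2 - 2 * (y0 + y0 * y2 + y2)) * x3 ^ 2
    Irreducible ((y2 + a) * c ^ 2 + (x1 ^ 2 - C s * y0 ^ 2) * c + P) := by
  intro y0 y2 a x1 X2 x3 c P
  exact main_irred s t
end

section
/- Let k be a field and t ∈ k. In the polynomial ring A := k[y₀, y₁, y₂, x₀, x₁, x₂, x₃], set F := y₀² + y₁² + y₂² − 2(y₀y₁ + y₀y₂ + y₁y₂), f := y₁(y₂+1)x₀² + y₀y₂x₁² + y₀y₁(1 − t·y₀)x₂² + F, and g := y₁²(y₂+1)x₀² + y₀y₂y₁x₁² + y₀(1 − t·y₀)x₂² + y₁·F. Let B be the localization of A away from y₁. Then the k-algebra endomorphism φ of B determined by fixing y₀, y₁, y₂, x₀, x₁, x₃ and sending x₂ to y₁·x₂ is an automorphism of B satisfying φ(g) = y₁·f; in particular φ carries the principal ideal (g) onto the principal ideal (f)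 and induces a k-algebra isomorphism B/(g) ≅ B/(f). -/
open MvPolynomial

/-- Let `k` be a field and `t ∈ k`.  In the polynomial ring
`A := k[y₀, y₁, y₂, x₀, x₁, x₂, x₃]`, set
`F := y₀² + y₁² + y₂² − 2(y₀y₁ + y₀y₂ + y₁y₂)`,
`f := y₁(y₂+1)x₀² + y₀y₂x₁² + y₀y₁(1 − t·y₀)x₂² + F`, and
`g := y₁²(y₂+1)x₀² + y₀y₂y₁x₁² + y₀(1 − t·y₀)x₂² + y₁·F`.
Let `B` be the localization of `A` away from `y₁`.  Then the `k`-algebra endomorphism `φ` of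
`B` determined by fixing `y₀, y₁, y₂, x₀, x₁, x₃` and sending `x₂` to `y₁·x₂` is an
automorphism of `B` satisfying `φ(g) = y₁·f`; in particular `φ` carries the principal ideal
`(g)` onto the principal ideal `(f)` and induces a `k`-algebra isomorphism
`B/(g) ≅ B/(f)`.  Here the seven variables `y₀, y₁, y₂, x₀, x₁, x₂, x₃` are `X 0, …, X 6`. -/
theorem stmt_9 (k : Type*) [Field k] (t : k) :
    let A := MvPolynomial (Fin 7) k
    let y0 : A := X 0
    let y1 : A := X 1
    let y2 : A := X 2
    let x0 : A := X 3
    let x1 : A := X 4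
    let x2 : A := X 5
    let x3 : A := X 6
    let F : A := y0 ^ 2 + y1 ^ 2 + y2 ^ 2 - 2 * (y0 * y1 + y0 * y2 + y1 * y2)
    let f : A := y1 * (y2 + 1) * x0 ^ 2 + y0 * y2 * x1 ^ 2
      + y0 * y1 * (1 - C t * y0) * x2 ^ 2 + F
    let g : A := y1 ^ 2 * (y2 + 1) * x0 ^ 2 + y0 * y2 * y1 * x1 ^ 2
      + y0 * (1 - C t * y0) * x2 ^ 2 + y1 * F
    let B := Localization.Away y1
    let ι : A →+* B := algebraMap A B
    ∃ φ : B ≃ₐ[k] B,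
      φ (ι y0) = ι y0 ∧ φ (ι y1) = ι y1 ∧ φ (ι y2) = ι y2 ∧
      φ (ι x0) = ι x0 ∧ φ (ι x1) = ι x1 ∧ φ (ι x3) = ι x3 ∧
      φ (ι x2) = ι (y1 * x2) ∧
      φ (ι g) = ι (y1 * f) ∧
      Ideal.map φ.toAlgHom (Ideal.span {ι g}) = Ideal.span {ι f} ∧
      Nonempty ((B ⧸ Ideal.span {ι g}) ≃ₐ[k] (B ⧸ Ideal.span {ι f})) := by
  intro A y0 y1 y2 x0 x1 x2 x3 F f g B ι
  have hu : IsUnit (ι y1) :=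
    IsLocalization.map_units (M := Submonoid.powers y1) B ⟨y1, Submonoid.mem_powers y1⟩
  set u : Bˣ := hu.unit with hu_def
  have huspec : (u : B) = ι y1 := hu.unit_spec
  set w : Fin 7 → A := fun i => if i = 5 then X 1 * X 5 else X i with hw
  have hw5 : w 5 = X 1 * X 5 := if_pos rfl
  have hwn : ∀ i : Fin 7, i ≠ 5 → w i = X i := fun i hi => if_neg hi
  set Φ0 : A →ₐ[k] B := (IsScalarTower.toAlgHom k A B).comp (aeval w) with hΦ0def
  have hΦ0 : ∀ p : A, Φ0 p = ι (aeval w p) := fun p => rfl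
  have hΦ0u : ∀ m : Submonoid.powers y1, IsUnit (Φ0 m) := by
    rintro ⟨m, n, rfl⟩
    have : Φ0 (y1 ^ n) = (ι y1) ^ n := by
      rw [hΦ0, map_pow, map_pow, show (aeval w) (y1 : A) = w 1 from aeval_X w 1,
        hwn 1 (by decide)]
    rw [this]
    exact hu.pow n
  set φ' : B →ₐ[k] B := IsLocalization.liftAlgHom (M := Submonoid.powers y1) hΦ0u with hφ'def
  have hφ' : ∀ p : A, φ' (ι p) = Φ0 p := fun p => by
    rw [hφ'def, IsLocalization.liftAlgHom_apply]
    exact IsLocalization.lift_eq hΦ0u p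
  set w' : Fin 7 → B := fun i => if i = 5 then (↑u⁻¹ : B) * ι (X 5) else ι (X i) with hw'
  have hw'5 : w' 5 = (↑u⁻¹ : B) * ι (X 5) := if_pos rfl
  have hw'n : ∀ i : Fin 7, i ≠ 5 → w' i = ι (X i) := fun i hi => if_neg hi
  set Ψ0 : A →ₐ[k] B := aeval w' with hΨ0def
  have hΨ0u : ∀ m : Submonoid.powers y1, IsUnit (Ψ0 m) := by
    rintro ⟨m, n, rfl⟩
    have : Ψ0 (y1 ^ n) = (ι y1) ^ n := by
      rw [hΨ0def, map_pow, show (aeval w') (y1 : A) = w' 1 from aeval_X w' 1,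
        hw'n 1 (by decide)]
    rw [this]
    exact hu.pow n
  set ψ' : B →ₐ[k] B := IsLocalization.liftAlgHom (M := Submonoid.powers y1) hΨ0u with hψ'def
  have hψ' : ∀ p : A, ψ' (ι p) = Ψ0 p := fun p => by
    rw [hψ'def, IsLocalization.liftAlgHom_apply]
    exact IsLocalization.lift_eq hΨ0u p
  have hφX : ∀ i : Fin 7, φ' (ι (X i)) = ι (w i) := fun i => by
    rw [hφ', hΦ0, aeval_X]
  have hψX : ∀ i : Fin 7, ψ' (ι (X i)) = w' i := fun i => by
    rw [hψ', hΨ0def, aeval_X]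
  have hφy1 : φ' (ι y1) = ι y1 := by
    have h := hφX 1
    rw [hwn 1 (by decide)] at h
    exact h
  have hφinv : φ' (↑u⁻¹ : B) * ι y1 = 1 := by
    have h1 : (↑u⁻¹ : B) * ι y1 = 1 := by rw [← huspec]; exact u.inv_mul
    calc φ' (↑u⁻¹ : B) * ι y1 = φ' (↑u⁻¹ : B) * φ' (ι y1) := by rw [hφy1]
      _ = φ' ((↑u⁻¹ : B) * ι y1) := (map_mul φ' _ _).symm
      _ = 1 := by rw [h1, map_one]
  have comp_ext : ∀ (Θ : B →ₐ[k] B), (∀ i : Fin 7, Θ (ι (X i)) = ι (X i)) → Θ = AlgHom.id k B := by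
    intro Θ hΘ
    have hring : Θ.toRingHom = (AlgHom.id k B).toRingHom := by
      apply IsLocalization.ringHom_ext (Submonoid.powers y1)
      apply MvPolynomial.ringHom_ext
      · intro r
        have h : ι (C r) = algebraMap k B r := by
          rw [show (C r : A) = algebraMap k A r from rfl, ← IsScalarTower.algebraMap_apply]
        simp only [RingHom.coe_comp, Function.comp_apply]
        rw [show (ι : A →+* B) (C r) = algebraMap k B r from h]
        simp [Θ.commutes r]
      · intro i
        simpa using hΘ i
    exact AlgHom.ext fun b => DFunLike.congr_fun hring b
  have hcomp1 : φ'.comp ψ' = AlgHom.id k B := by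
    apply comp_ext
    intro i
    by_cases hi : i = 5
    · subst hi
      rw [AlgHom.comp_apply, hψX, hw'5, map_mul, hφX, hw5, map_mul]
      calc φ' (↑u⁻¹ : B) * (ι (X 1) * ι (X 5)) = (φ' (↑u⁻¹ : B) * ι y1) * ι (X 5) := by
            rw [show ι (X 1) = ι y1 from rfl]; ring
        _ = ι (X 5) := by rw [hφinv, one_mul]
    · rw [AlgHom.comp_apply, hψX, hw'n i hi, hφX, hwn i hi]
  have hcomp2 : ψ'.comp φ' = AlgHom.id k B := by
    apply comp_ext
    intro i
    by_cases hi : i = 5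
    · subst hi
      rw [AlgHom.comp_apply, hφX, hw5, map_mul, map_mul, hψX, hψX, hw'5, hw'n 1 (by decide)]
      calc ι (X 1) * ((↑u⁻¹ : B) * ι (X 5)) = ((↑u⁻¹ : B) * ι y1) * ι (X 5) := by
            rw [show ι (X 1) = ι y1 from rfl]; ring
        _ = ι (X 5) := by rw [← huspec, u.inv_mul, one_mul]
    · rw [AlgHom.comp_apply, hφX, hwn i hi, hψX, hw'n i hi]
  set φe : B ≃ₐ[k] B := AlgEquiv.ofAlgHom φ' ψ' hcomp1 hcomp2 with hφedef
  have hφe : ∀ p : A, φe (ι p) = Φ0 p := hφ'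
  -- the polynomial identity
  have e0 : aeval w (X 0 : A) = X 0 := by rw [aeval_X]; exact hwn 0 (by decide)
  have e1 : aeval w (X 1 : A) = X 1 := by rw [aeval_X]; exact hwn 1 (by decide)
  have e2 : aeval w (X 2 : A) = X 2 := by rw [aeval_X]; exact hwn 2 (by decide)
  have e3 : aeval w (X 3 : A) = X 3 := by rw [aeval_X]; exact hwn 3 (by decide)
  have e4 : aeval w (X 4 : A) = X 4 := by rw [aeval_X]; exact hwn 4 (by decide)
  have e6 : aeval w (X 6 : A) = X 6 := by rw [aeval_X]; exact hwn 6 (by decide)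
  have e5 : aeval w (X 5 : A) = X 1 * X 5 := by rw [aeval_X]; exact hw5
  have ec : aeval w (C t : A) = C t := by
    rw [show (C t : A) = algebraMap k A t from rfl, AlgHom.commutes]
  have hsub : aeval w g = y1 * f := by
    simp only [g, f, F, y0, y1, y2, x0, x1, x2, x3, map_add, map_sub, map_mul, map_pow,
      map_one, map_ofNat, e0, e1, e2, e3, e4, e5, e6, ec]
    ring
  have hg : φe (ι g) = ι (y1 * f) := by rw [hφe g, hΦ0 g, hsub]
  have gen : ∀ i : Fin 7, i ≠ 5 → φe (ι (X i)) = ι (X i) := fun i hi => by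
    rw [hφe, hΦ0, aeval_X, hwn i hi]
  have hx2 : φe (ι x2) = ι (y1 * x2) := by
    rw [hφe, hΦ0, show (aeval w) (x2 : A) = w 5 from aeval_X w 5, hw5]
  have hmap : Ideal.map φe.toAlgHom (Ideal.span {ι g}) = Ideal.span {ι f} := by
    rw [Ideal.map_span, Set.image_singleton]
    show Ideal.span {φe (ι g)} = _
    rw [hg, map_mul, Ideal.span_singleton_mul_left_unit hu]
  have hmap' : Ideal.span {ι f} = Ideal.map (φe : B →+* B) (Ideal.span {ι g}) := by
    rw [Ideal.map_span, Set.image_singleton]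
    show _ = Ideal.span {φe (ι g)}
    rw [hg, map_mul, Ideal.span_singleton_mul_left_unit hu]
  exact ⟨φe, gen 0 (by decide), gen 1 (by decide), gen 2 (by decide), gen 3 (by decide),
    gen 4 (by decide), gen 6 (by decide), hx2, hg, hmap,
    ⟨Ideal.quotientEquivAlg (Ideal.span {ι g}) (Ideal.span {ι f}) φe hmap'⟩⟩
end

section
/- Let A be a commutative ring and let p, q ∈ A. Consider the polynomial ring A[T] and its localization A[T]_p away from (the image of) p. Then the quotient ring A[T]_p/(q + p·T) is isomorphic as an A-algebra to the localization A_p of A away from p, the isomorphism sending T to −q/p. -/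
open Polynomial

set_option maxHeartbeats 1000000 in
/-- Let `A` be a commutative ring and let `p, q ∈ A`.  Consider the
polynomial ring `A[T]` and its localization `A[T]_p` away from (the image of) `p`.  Then the
quotient ring `A[T]_p/(q + p·T)` is isomorphic as an `A`-algebra to the localization `A_p` of
`A` away from `p`, the isomorphism sending `T` to `−q/p`. -/
theorem stmt_11 (A : Type*) [CommRing A] (p q : A) :
    let B := Localization.Away (Polynomial.C p : Polynomial A)
    let I : Ideal B := Ideal.span
      {algebraMap (Polynomial A) B (Polynomial.C q + Polynomial.C p * Polynomial.X)}
    ∃ e : (B ⧸ I) ≃ₐ[A] Localization.Away p,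
      e (Ideal.Quotient.mk I (algebraMap (Polynomial A) B Polynomial.X)) =
        - algebraMap A (Localization.Away p) q * IsLocalization.Away.invSelf p := by
  intro B I
  set R := Localization.Away p with hR
  set v : R := - algebraMap A R q * IsLocalization.Away.invSelf p with hv
  have hpv : algebraMap A R p * v = - algebraMap A R q := by
    rw [hv, mul_comm (- algebraMap A R q), ← mul_assoc]
    rw [show algebraMap A R p * IsLocalization.Away.invSelf p = 1 from
      IsLocalization.Away.mul_invSelf p, one_mul]
  -- forward map
  set f : Polynomial A →+* R := (aeval v).toRingHom with hf
  have hfC : ∀ a : A, f (C a) = algebraMap A R a := by intro a; simp [hf]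
  have hfu : IsUnit (f (C p)) := by
    rw [hfC]
    exact IsLocalization.map_units R (⟨p, Submonoid.mem_powers p⟩ : Submonoid.powers p)
  set g : B →+* R := IsLocalization.Away.lift (C p) hfu with hg
  have hglift : ∀ x : Polynomial A, g (algebraMap (Polynomial A) B x) = f x := fun x =>
    IsLocalization.Away.lift_eq (C p) hfu x
  have hgen : g (algebraMap (Polynomial A) B (C q + C p * X)) = 0 := by
    rw [hglift]
    simp only [hf, AlgHom.toRingHom_eq_coe, RingHom.coe_coe, map_add, map_mul, aeval_C, aeval_X]
    rw [hpv]; ring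
  have hker : I ≤ RingHom.ker g := by
    rw [Ideal.span_le, Set.singleton_subset_iff]
    exact hgen
  set gbar : B ⧸ I →+* R := Ideal.Quotient.lift I g hker with hgbar
  -- backward map
  set h0 : A →+* B ⧸ I :=
    ((Ideal.Quotient.mk I).comp (algebraMap (Polynomial A) B)).comp (C : A →+* Polynomial A)
    with hh0
  have hpu : IsUnit (h0 p) := by
    have : IsUnit (algebraMap (Polynomial A) B (C p)) :=
      IsLocalization.map_units B (⟨C p, Submonoid.mem_powers _⟩ : Submonoid.powers (C p))
    exact this.map (Ideal.Quotient.mk I)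
  set h : R →+* B ⧸ I := IsLocalization.Away.lift (g := h0) p hpu with hh
  have hhlift : ∀ a : A, h (algebraMap A R a) = h0 a := fun a =>
    IsLocalization.Away.lift_eq p hpu a
  -- key relation in B ⧸ I
  have hrel : Ideal.Quotient.mk I (algebraMap (Polynomial A) B (C q)) +
      Ideal.Quotient.mk I (algebraMap (Polynomial A) B (C p)) *
      Ideal.Quotient.mk I (algebraMap (Polynomial A) B X) = 0 := by
    have h0 : Ideal.Quotient.mk I (algebraMap (Polynomial A) B (C q + C p * X)) = 0 :=
      Ideal.Quotient.eq_zero_iff_mem.mpr (Ideal.subset_span rfl)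
    simpa only [map_add, map_mul] using h0
  have hvX : h v = Ideal.Quotient.mk I (algebraMap (Polynomial A) B X) := by
    have hunit := hpu
    obtain ⟨u, hu⟩ := hunit
    have hinv : h (IsLocalization.Away.invSelf p) = ↑u⁻¹ := by
      have h1 : h (algebraMap A R p) * h (IsLocalization.Away.invSelf p) = 1 := by
        rw [← map_mul, IsLocalization.Away.mul_invSelf, map_one]
      rw [hhlift, ← hu] at h1
      calc h (IsLocalization.Away.invSelf p) = ↑u⁻¹ * (↑u * h (IsLocalization.Away.invSelf p)) := by
            rw [← mul_assoc, Units.inv_mul, one_mul]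
        _ = ↑u⁻¹ := by rw [h1, mul_one]
    have h2 : (↑u : B ⧸ I) * Ideal.Quotient.mk I (algebraMap (Polynomial A) B X) = - h0 q := by
      rw [hu]
      have hpq : h0 p = Ideal.Quotient.mk I (algebraMap (Polynomial A) B (C p)) := rfl
      have hqq : h0 q = Ideal.Quotient.mk I (algebraMap (Polynomial A) B (C q)) := rfl
      rw [hpq, hqq]
      linear_combination hrel
    rw [hv, map_mul, map_neg, hhlift, hinv]
    have : h0 q = Ideal.Quotient.mk I (algebraMap (Polynomial A) B (C q)) := rfl
    calc -h0 q * ↑u⁻¹ = ↑u⁻¹ * (↑u * Ideal.Quotient.mk I (algebraMap (Polynomial A) B X)) := by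
          rw [h2]; ring
      _ = _ := by rw [← mul_assoc, Units.inv_mul, one_mul]
  -- compositions
  have hcomp1 : gbar.comp h = RingHom.id R := by
    apply IsLocalization.ringHom_ext (Submonoid.powers p)
    ext a
    simp only [RingHom.coe_comp, Function.comp_apply, RingHom.id_apply]
    rw [hhlift]
    have : gbar (h0 a) = g (algebraMap (Polynomial A) B (C a)) := rfl
    rw [this, hglift, hfC]
  have hcomp2 : h.comp gbar = RingHom.id (B ⧸ I) := by
    apply Ideal.Quotient.ringHom_ext
    have : (h.comp gbar).comp (Ideal.Quotient.mk I) = h.comp g := rfl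
    rw [this]
    apply IsLocalization.ringHom_ext (Submonoid.powers (C p : Polynomial A))
    apply Polynomial.ringHom_ext
    · intro a
      simp only [RingHom.coe_comp, Function.comp_apply]
      rw [hglift, hfC, hhlift]
      rfl
    · simp only [RingHom.coe_comp, Function.comp_apply]
      rw [hglift]
      have : f X = v := by simp [hf]
      rw [this, hvX]
      rfl
  set E : B ⧸ I ≃+* R :=
    { toFun := gbar, invFun := h,
      left_inv := fun x => congrFun (congrArg (fun φ : (B ⧸ I) →+* (B ⧸ I) => ⇑φ) hcomp2) x,
      right_inv := fun x => congrFun (congrArg (fun φ : R →+* R => ⇑φ) hcomp1) x,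
      map_mul' := map_mul gbar, map_add' := map_add gbar } with hE
  refine ⟨AlgEquiv.ofRingEquiv (f := E) ?_, ?_⟩
  · intro a
    have h1 : algebraMap A (B ⧸ I) a =
        Ideal.Quotient.mk I (algebraMap (Polynomial A) B (C a)) := by
      rw [IsScalarTower.algebraMap_apply A B (B ⧸ I),
        IsScalarTower.algebraMap_apply A (Polynomial A) B]
      rfl
    show gbar (algebraMap A (B ⧸ I) a) = algebraMap A R a
    rw [h1]
    have : gbar (Ideal.Quotient.mk I (algebraMap (Polynomial A) B (C a))) =
        g (algebraMap (Polynomial A) B (C a)) := rfl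
    rw [this, hglift, hfC]
  · show gbar (Ideal.Quotient.mk I (algebraMap (Polynomial A) B X)) = _
    have : gbar (Ideal.Quotient.mk I (algebraMap (Polynomial A) B X)) =
        g (algebraMap (Polynomial A) B X) := rfl
    rw [this, hglift]
    simp [hf, hv]
end

section
/- Let A be a commutative ring and let t, h₀, h₁, h₂ ∈ A. Let B := A[a, b] be the polynomial ring in two variables over A, and let B_a be its localization away from a. Then there is an A-algebra isomorphism B_a/(a·b + t, h₀ + a·h₁ + b·h₂) ≅ (A[a]_a)/(a·h₀ + a²·h₁ − t·h₂) which fixes A and sends a to a (and b to −t/a). -/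
/-!
On the chart `a ≠ 0` the relation `a·b + t = 0` solves for `b = -t/a`, eliminating `b`; the
second generator then becomes `h₀ + a·h₁ - (t/a)·h₂ = a⁻¹·(a·h₀ + a²·h₁ - t·h₂)`, a unit multiple
of the hypersurface equation. Both quotients are characterised by the universal property of
localization followed by quotient, and the maps `a ↦ x, b ↦ -t·x⁻¹` and `x ↦ a` given by these
universal properties are mutually inverse.
-/

open MvPolynomial

namespace AwayQuotient

variable {A R S : Type*} [CommSemiring A] [CommRing R] [CommRing S] [Algebra A R] [Algebra A S]
  {x : R} {s : Set (Localization.Away x)}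

noncomputable def lift (f : R →ₐ[A] S) (hx : IsUnit (f x))
    (hs : ∀ r ∈ s, IsLocalization.Away.lift x hx r = 0) :
    Localization.Away x ⧸ Ideal.span s →ₐ[A] S :=
  Ideal.Quotient.liftₐ _ (IsLocalization.Away.liftAlgHom x hx) fun _ hr =>
    (Ideal.span_le (I := RingHom.ker (IsLocalization.Away.lift x hx)) |>.mpr hs) hr

@[simp]
theorem lift_mk_algebraMap (f : R →ₐ[A] S) (hx : IsUnit (f x))
    (hs : ∀ r ∈ s, IsLocalization.Away.lift x hx r = 0) (r : R) :
    lift f hx hs (Ideal.Quotient.mk _ (algebraMap R _ r)) = f r :=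
  IsLocalization.Away.lift_eq x hx r

theorem algHom_ext {I : Ideal (Localization.Away x)} {g₁ g₂ : Localization.Away x ⧸ I →ₐ[A] S}
    (h : g₁.comp ((Ideal.Quotient.mkₐ A I).comp (IsScalarTower.toAlgHom A R _)) =
      g₂.comp ((Ideal.Quotient.mkₐ A I).comp (IsScalarTower.toAlgHom A R _))) :
    g₁ = g₂ :=
  Ideal.Quotient.algHom_ext A <| IsLocalization.algHom_ext (Submonoid.powers x) h

end AwayQuotient

section Elimination

variable {A : Type*} [CommRing A] (t h0 h1 h2 : A)

local notation "Bₐ" => Localization.Away (X 0 : MvPolynomial (Fin 2) A)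
local notation "Aₓ" => Localization.Away (Polynomial.X : Polynomial A)

noncomputable def completeIntersectionIdeal : Ideal Bₐ :=
  Ideal.span {algebraMap (MvPolynomial (Fin 2) A) Bₐ (X 0 * X 1 + C t),
    algebraMap (MvPolynomial (Fin 2) A) Bₐ (C h0 + X 0 * C h1 + X 1 * C h2)}

noncomputable def hypersurfaceIdeal : Ideal Aₓ :=
  Ideal.span {algebraMap (Polynomial A) Aₓ (Polynomial.X * Polynomial.C h0 +
    Polynomial.X ^ 2 * Polynomial.C h1 - Polynomial.C t * Polynomial.C h2)}

abbrev CompleteIntersection := Bₐ ⧸ completeIntersectionIdeal t h0 h1 h2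

abbrev Hypersurface := Aₓ ⧸ hypersurfaceIdeal t h0 h1 h2

namespace CompleteIntersection

noncomputable def a : CompleteIntersection t h0 h1 h2 :=
  Ideal.Quotient.mk _ (algebraMap (MvPolynomial (Fin 2) A) Bₐ (X 0))

noncomputable def b : CompleteIntersection t h0 h1 h2 :=
  Ideal.Quotient.mk _ (algebraMap (MvPolynomial (Fin 2) A) Bₐ (X 1))

theorem isUnit_a : IsUnit (a t h0 h1 h2) :=
  (IsLocalization.Away.algebraMap_isUnit (X 0 : MvPolynomial (Fin 2) A)).map (Ideal.Quotient.mk _)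

theorem a_mul_b_add : a t h0 h1 h2 * b t h0 h1 h2 + algebraMap A _ t = 0 := by
  have h : Ideal.Quotient.mk (completeIntersectionIdeal t h0 h1 h2)
      (algebraMap (MvPolynomial (Fin 2) A) Bₐ (X 0 * X 1 + C t)) = 0 :=
    Ideal.Quotient.eq_zero_iff_mem.mpr (Ideal.subset_span (Set.mem_insert _ _))
  simp only [map_add, map_mul] at h
  exact h

theorem linear_relation :
    algebraMap A _ h0 + a t h0 h1 h2 * algebraMap A _ h1 + b t h0 h1 h2 * algebraMap A _ h2 = 0 := by
  have h : Ideal.Quotient.mk (completeIntersectionIdeal t h0 h1 h2)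
      (algebraMap (MvPolynomial (Fin 2) A) Bₐ (C h0 + X 0 * C h1 + X 1 * C h2)) = 0 :=
    Ideal.Quotient.eq_zero_iff_mem.mpr (Ideal.subset_span (Set.mem_insert_of_mem _ rfl))
  simp only [map_add, map_mul] at h
  exact h

end CompleteIntersection

namespace Hypersurface

noncomputable def x : Hypersurface t h0 h1 h2 :=
  Ideal.Quotient.mk _ (algebraMap (Polynomial A) Aₓ Polynomial.X)

noncomputable def xInv : Hypersurface t h0 h1 h2 :=
  Ideal.Quotient.mk _ (IsLocalization.Away.invSelf (Polynomial.X : Polynomial A))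

theorem x_mul_xInv : x t h0 h1 h2 * xInv t h0 h1 h2 = 1 := by
  rw [x, xInv, ← map_mul, IsLocalization.Away.mul_invSelf, map_one]

theorem relation : x t h0 h1 h2 * algebraMap A _ h0 + x t h0 h1 h2 ^ 2 * algebraMap A _ h1
    - algebraMap A _ t * algebraMap A _ h2 = 0 := by
  have h : Ideal.Quotient.mk (hypersurfaceIdeal t h0 h1 h2) (algebraMap (Polynomial A) Aₓ
      (Polynomial.X * Polynomial.C h0 + Polynomial.X ^ 2 * Polynomial.C h1
        - Polynomial.C t * Polynomial.C h2)) = 0 :=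
    Ideal.Quotient.eq_zero_iff_mem.mpr (Ideal.subset_span rfl)
  simp only [map_add, map_mul, map_sub, map_pow] at h
  exact h

end Hypersurface

noncomputable def toHypersurface :
    CompleteIntersection t h0 h1 h2 →ₐ[A] Hypersurface t h0 h1 h2 :=
  AwayQuotient.lift
    (aeval ![Hypersurface.x t h0 h1 h2, -algebraMap A _ t * Hypersurface.xInv t h0 h1 h2])
    (by simpa using IsUnit.of_mul_eq_one _ (Hypersurface.x_mul_xInv t h0 h1 h2))
    (by
      rintro _ (rfl | rfl) <;>
        simp only [IsLocalization.Away.lift_eq, AlgHom.toRingHom_eq_coe, RingHom.coe_coe,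
          map_add, map_mul, aeval_X, algHom_C, Matrix.cons_val_zero, Matrix.cons_val_one]
      · linear_combination (-algebraMap A _ t) * Hypersurface.x_mul_xInv t h0 h1 h2
      · linear_combination Hypersurface.xInv t h0 h1 h2 * Hypersurface.relation t h0 h1 h2 -
          (algebraMap A _ h0 + Hypersurface.x t h0 h1 h2 * algebraMap A _ h1) *
            Hypersurface.x_mul_xInv t h0 h1 h2)

noncomputable def toCompleteIntersection :
    Hypersurface t h0 h1 h2 →ₐ[A] CompleteIntersection t h0 h1 h2 :=
  AwayQuotient.lift (Polynomial.aeval (CompleteIntersection.a t h0 h1 h2))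
    (by simpa using CompleteIntersection.isUnit_a t h0 h1 h2)
    (by
      rintro _ rfl
      simp only [IsLocalization.Away.lift_eq, AlgHom.toRingHom_eq_coe, RingHom.coe_coe, map_add,
        map_mul, map_sub, map_pow, Polynomial.aeval_X, Polynomial.aeval_C]
      linear_combination CompleteIntersection.a t h0 h1 h2 *
          CompleteIntersection.linear_relation t h0 h1 h2 -
        algebraMap A _ h2 * CompleteIntersection.a_mul_b_add t h0 h1 h2)

theorem toHypersurface_a :
    toHypersurface t h0 h1 h2 (CompleteIntersection.a t h0 h1 h2) = Hypersurface.x t h0 h1 h2 :=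
  (AwayQuotient.lift_mk_algebraMap _ _ _ _).trans (by simp)

theorem toHypersurface_b :
    toHypersurface t h0 h1 h2 (CompleteIntersection.b t h0 h1 h2) =
      -algebraMap A _ t * Hypersurface.xInv t h0 h1 h2 :=
  (AwayQuotient.lift_mk_algebraMap _ _ _ _).trans (by simp)

theorem toCompleteIntersection_x :
    toCompleteIntersection t h0 h1 h2 (Hypersurface.x t h0 h1 h2) =
      CompleteIntersection.a t h0 h1 h2 :=
  (AwayQuotient.lift_mk_algebraMap _ _ _ _).trans (Polynomial.aeval_X _)

theorem toCompleteIntersection_xInv_mul_a :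
    toCompleteIntersection t h0 h1 h2 (Hypersurface.xInv t h0 h1 h2) *
      CompleteIntersection.a t h0 h1 h2 = 1 := by
  rw [← toCompleteIntersection_x, ← map_mul, mul_comm, Hypersurface.x_mul_xInv, map_one]

theorem toCompleteIntersection_comp_toHypersurface :
    (toCompleteIntersection t h0 h1 h2).comp (toHypersurface t h0 h1 h2) = AlgHom.id A _ := by
  refine AwayQuotient.algHom_ext (MvPolynomial.algHom_ext fun i => ?_)
  fin_cases i
  · show toCompleteIntersection t h0 h1 h2 (toHypersurface t h0 h1 h2
      (CompleteIntersection.a t h0 h1 h2)) = CompleteIntersection.a t h0 h1 h2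
    rw [toHypersurface_a, toCompleteIntersection_x]
  · show toCompleteIntersection t h0 h1 h2 (toHypersurface t h0 h1 h2
      (CompleteIntersection.b t h0 h1 h2)) = CompleteIntersection.b t h0 h1 h2
    rw [toHypersurface_b, map_mul, map_neg, AlgHom.commutes]
    linear_combination (-toCompleteIntersection t h0 h1 h2 (Hypersurface.xInv t h0 h1 h2)) *
        CompleteIntersection.a_mul_b_add t h0 h1 h2 +
      CompleteIntersection.b t h0 h1 h2 * toCompleteIntersection_xInv_mul_a t h0 h1 h2

theorem toHypersurface_comp_toCompleteIntersection :
    (toHypersurface t h0 h1 h2).comp (toCompleteIntersection t h0 h1 h2) = AlgHom.id A _ := by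
  refine AwayQuotient.algHom_ext (Polynomial.algHom_ext ?_)
  show toHypersurface t h0 h1 h2 (toCompleteIntersection t h0 h1 h2 (Hypersurface.x t h0 h1 h2)) =
    Hypersurface.x t h0 h1 h2
  rw [toCompleteIntersection_x, toHypersurface_a]

noncomputable def eliminationEquiv :
    CompleteIntersection t h0 h1 h2 ≃ₐ[A] Hypersurface t h0 h1 h2 :=
  AlgEquiv.ofAlgHom _ _ (toHypersurface_comp_toCompleteIntersection t h0 h1 h2)
    (toCompleteIntersection_comp_toHypersurface t h0 h1 h2)

end Elimination

/-- Let `A` be a commutative ring and let `t, h₀, h₁, h₂ ∈ A`.  Let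
`B := A[a, b]` be the polynomial ring in two variables over `A` and let `B_a` be its
localization away from `a`.  Then there is an `A`-algebra isomorphism
`B_a/(a·b + t, h₀ + a·h₁ + b·h₂) ≅ (A[a]_a)/(a·h₀ + a²·h₁ − t·h₂)` which fixes `A` and sends
`a` to `a` (and `b` to `−t/a`).  Here `a = X 0` and `b = X 1` in
`B = MvPolynomial (Fin 2) A`, and `A[a]` is `Polynomial A` with `a = Polynomial.X`. -/
theorem stmt_13 (A : Type*) [CommRing A] (t h0 h1 h2 : A) :
    let B := MvPolynomial (Fin 2) A
    let a : B := X 0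
    let b : B := X 1
    let Ba := Localization.Away a
    let ι : B →+* Ba := algebraMap B Ba
    let I : Ideal Ba := Ideal.span {ι (a * b + C t), ι (C h0 + a * C h1 + b * C h2)}
    let Aa := Localization.Away (Polynomial.X : Polynomial A)
    let ι' : Polynomial A →+* Aa := algebraMap (Polynomial A) Aa
    let J : Ideal Aa := Ideal.span
      {ι' (Polynomial.X * Polynomial.C h0 + Polynomial.X ^ 2 * Polynomial.C h1
            - Polynomial.C t * Polynomial.C h2)}
    ∃ e : (Ba ⧸ I) ≃ₐ[A] (Aa ⧸ J),
      e (Ideal.Quotient.mk I (ι a)) = Ideal.Quotient.mk J (ι' Polynomial.X) ∧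
      e (Ideal.Quotient.mk I (ι b)) =
        Ideal.Quotient.mk J
          (- algebraMap A Aa t * IsLocalization.Away.invSelf (Polynomial.X : Polynomial A)) :=
  ⟨eliminationEquiv t h0 h1 h2, toHypersurface_a t h0 h1 h2, toHypersurface_b t h0 h1 h2⟩
end

section
/- Let K be a field of characteristic different from 2, let f ≥ 2 be an integer and t ∈ K with t ≠ 0. Let A be a multivariate polynomial ring over K, let x ∈ A be one of the variables, and let G ∈ A. Suppose there exists a K-algebra homomorphism φ : A → K[X] with φ(x) = X such that the coefficients of φ(G) in degrees f and f−1 are both nonzero. Then Δ := G² + 4t·x^f is not the square of any element of A, and consequently the monic quadratic a² + G·a − t·x^f is irreducible in the polynomial ring A[a]. -/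
open MvPolynomial

/-- Let `K` be a field of characteristic different from `2`, let `f ≥ 2` be
an integer and `t ∈ K` with `t ≠ 0`.  Let `A` be a multivariate polynomial ring over `K` (in
finitely many variables), let `x ∈ A` be one of the variables, and let `G ∈ A`.  Suppose there
exists a `K`-algebra homomorphism `φ : A → K[X]` with `φ(x) = X` such that the coefficients of
`φ(G)` in degrees `f` and `f − 1` are both nonzero.  Then `Δ := G² + 4t·x^f` is not the square
of any element of `A`, and consequently the monic quadratic `a² + G·a − t·x^f` is irreducible
in the polynomial ring `A[a]`. -/
theorem stmt_14 (K : Type*) [Field K] (hchar : ringChar K ≠ 2)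
    (f : ℕ) (hf : 2 ≤ f) (t : K) (ht : t ≠ 0)
    (σ : Type*) [Finite σ] (i : σ) (G : MvPolynomial σ K)
    (φ : MvPolynomial σ K →ₐ[K] Polynomial K) (hφx : φ (X i) = Polynomial.X)
    (hcoefff : (φ G).coeff f ≠ 0) (hcoefff' : (φ G).coeff (f - 1) ≠ 0) :
    (¬ ∃ p : MvPolynomial σ K, G ^ 2 + C (4 * t) * X i ^ f = p ^ 2) ∧
      Irreducible (Polynomial.X ^ 2 + Polynomial.C G * Polynomial.X
        - Polynomial.C (C t * X i ^ f) : Polynomial (MvPolynomial σ K)) := by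
  have h2 : (2 : K) ≠ 0 := Ring.two_ne_zero hchar
  have h4t : (4 * t : K) ≠ 0 := by
    have h4 : (4 : K) ≠ 0 := by
      intro h
      exact h2 (by
        have : (2 : K) * 2 = 0 := by rw [show (2:K)*2 = 4 by norm_num, h]
        exact (mul_self_eq_zero).mp this)
    exact mul_ne_zero h4 ht
  have hns : ¬ ∃ p : MvPolynomial σ K, G ^ 2 + C (4 * t) * X i ^ f = p ^ 2 := by
    rintro ⟨p, hp⟩
    have hφp := congrArg φ hp
    have hCim : φ (C (4 * t)) = Polynomial.C (4 * t) := by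
      rw [← MvPolynomial.algebraMap_eq, AlgHom.commutes, Polynomial.algebraMap_eq]
    rw [map_add, map_pow, map_mul φ, map_pow, hφx, hCim, map_pow] at hφp
    set g : Polynomial K := φ G with hg
    set q : Polynomial K := φ p with hq
    set u : Polynomial K := q - g with hu
    set v : Polynomial K := q + g with hv
    have huv : u * v = Polynomial.C (4 * t) * Polynomial.X ^ f := by
      rw [hu, hv]; linear_combination -hφp
    have hune : u ≠ 0 := by
      intro h
      rw [h, zero_mul] at huv
      exact (mul_ne_zero (Polynomial.C_ne_zero.mpr h4t)
        (pow_ne_zero f Polynomial.X_ne_zero)) huv.symm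
    have hvne : v ≠ 0 := by
      intro h
      rw [h, mul_zero] at huv
      exact (mul_ne_zero (Polynomial.C_ne_zero.mpr h4t)
        (pow_ne_zero f Polynomial.X_ne_zero)) huv.symm
    have hdeg : u.natDegree + v.natDegree = f := by
      rw [← Polynomial.natDegree_mul hune hvne, huv,
        Polynomial.natDegree_C_mul_X_pow f _ h4t]
    have htdeg : u.natTrailingDegree + v.natTrailingDegree = f := by
      rw [← Polynomial.natTrailingDegree_mul hune hvne, huv,
        Polynomial.C_mul_X_pow_eq_monomial, Polynomial.natTrailingDegree_monomial h4t]
    have hut : u.natTrailingDegree = u.natDegree := by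
      have h1 := Polynomial.natTrailingDegree_le_natDegree u
      have h2' := Polynomial.natTrailingDegree_le_natDegree v
      omega
    have hvt : v.natTrailingDegree = v.natDegree := by
      have h1 := Polynomial.natTrailingDegree_le_natDegree u
      have h2' := Polynomial.natTrailingDegree_le_natDegree v
      omega
    have hucoeff : ∀ k, k ≠ u.natDegree → u.coeff k = 0 := by
      intro k hk
      rcases lt_or_gt_of_ne hk with h | h
      · exact Polynomial.coeff_eq_zero_of_lt_natTrailingDegree (by rw [hut]; exact h)
      · exact Polynomial.coeff_eq_zero_of_natDegree_lt h
    have hvcoeff : ∀ k, k ≠ v.natDegree → v.coeff k = 0 := by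
      intro k hk
      rcases lt_or_gt_of_ne hk with h | h
      · exact Polynomial.coeff_eq_zero_of_lt_natTrailingDegree (by rw [hvt]; exact h)
      · exact Polynomial.coeff_eq_zero_of_natDegree_lt h
    have hvu : v - u = Polynomial.C 2 * g := by
      have hC2 : (Polynomial.C (2:K)) = 2 := map_ofNat _ 2
      rw [hC2, hu, hv]; ring
    have hcf : f = u.natDegree ∨ f = v.natDegree := by
      by_contra hcon
      push_neg at hcon
      have : (v - u).coeff f = 0 := by
        rw [Polynomial.coeff_sub, hucoeff f hcon.1, hvcoeff f hcon.2, sub_zero]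
      rw [hvu, Polynomial.coeff_C_mul] at this
      exact (mul_ne_zero h2 hcoefff) this
    have hcf' : f - 1 = u.natDegree ∨ f - 1 = v.natDegree := by
      by_contra hcon
      push_neg at hcon
      have : (v - u).coeff (f - 1) = 0 := by
        rw [Polynomial.coeff_sub, hucoeff _ hcon.1, hvcoeff _ hcon.2, sub_zero]
      rw [hvu, Polynomial.coeff_C_mul] at this
      exact (mul_ne_zero h2 hcoefff') this
    omega
  refine ⟨hns, ?_⟩
  set P : Polynomial (MvPolynomial σ K) :=
    Polynomial.X ^ 2 + Polynomial.C G * Polynomial.X - Polynomial.C (C t * X i ^ f) with hP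
  have hPeq : P = Polynomial.X ^ 2 +
      (Polynomial.C G * Polynomial.X - Polynomial.C (C t * X i ^ f)) := by rw [hP]; ring
  have hrest : (Polynomial.C G * Polynomial.X - Polynomial.C (C t * X i ^ f)).degree < 2 := by
    apply lt_of_le_of_lt (Polynomial.degree_sub_le _ _)
    rw [max_lt_iff]
    constructor
    · apply lt_of_le_of_lt (Polynomial.degree_mul_le _ _)
      have h1 := Polynomial.degree_C_le (a := G)
      have h2' := Polynomial.degree_X_le (R := MvPolynomial σ K)
      calc Polynomial.degree (Polynomial.C G) + Polynomial.degree (Polynomial.X :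
            Polynomial (MvPolynomial σ K)) ≤ 0 + 1 := add_le_add h1 h2'
        _ < 2 := by norm_num
    · exact lt_of_le_of_lt Polynomial.degree_C_le (by norm_num)
  have hmonic : P.Monic := by
    rw [hPeq]
    exact Polynomial.monic_X_pow_add (by simpa using hrest)
  have hnd : P.natDegree = 2 := by
    apply Polynomial.natDegree_eq_of_degree_eq_some
    rw [hPeq]
    rw [add_comm, Polynomial.degree_add_eq_right_of_degree_lt]
    · exact Polynomial.degree_X_pow 2
    · rw [Polynomial.degree_X_pow]; exact hrest
  by_contra hirr
  obtain ⟨c₁, c₂, h0, h1⟩ := (hmonic.not_irreducible_iff_exists_add_mul_eq_coeff hnd).mp hirr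
  have hc0 : P.coeff 0 = -(C t * X i ^ f) := by
    rw [hP]
    simp only [Polynomial.coeff_sub, Polynomial.coeff_add, Polynomial.coeff_X_pow,
      Polynomial.coeff_C_mul, Polynomial.coeff_X_zero, Polynomial.coeff_C_zero, mul_zero]
    norm_num
  have hc1 : P.coeff 1 = G := by
    rw [hP]
    simp only [Polynomial.coeff_sub, Polynomial.coeff_add, Polynomial.coeff_X_pow,
      Polynomial.coeff_C_mul, Polynomial.coeff_X_one, Polynomial.coeff_C, mul_one]
    norm_num
  rw [hc0] at h0
  rw [hc1] at h1
  apply hns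
  refine ⟨c₁ - c₂, ?_⟩
  have hC4 : (C (4 * t) : MvPolynomial σ K) = 4 * C t := by
    rw [map_mul C 4 t, map_ofNat]
  rw [hC4]
  linear_combination (G + c₁ + c₂) * h1 - 4 * h0
end
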